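/- arXiv:1006.2059 — 6 statements merged into one kernel-verified Lean document; each statement's English description precedes it below -/
import Mathlib

section
/- Let 𝒱 be a finite vertex set, let R be a finite index set, and for each r ∈ R let (f₀ʳ, f₁ʳ) be a pair of pointed oriented faces with vertexes in 𝒱 and let M_r ∈ ℝ. For a discrete gauge field U on 𝒱 define the discrete Yang–Mills action S'(U) = Σ_{r∈R} M_r · Re tr( U_{ḟ₁ʳ ḟ₀ʳ} (1 − F_{f₀ʳ})ᴴ U_{ḟ₀ʳ ḟ₁ʳ} (1 − F_{f₁ʳ}) ), where F_f and ḟ denote the curvature and origin of the pointed oriented face f computed from U. Then S' is discretely gauge invariant: for every family (G_i)_{i∈𝒱} of unitary n×n complex matrices, the discrete gauge transformation U'_{ji} = G_j U_{ji} G_i^{-1} satisfies S'(U') = S'(U). -/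
open Matrix

/-- The origin of a pointed oriented face `(k, j, i)` is its last vertex `i`. -/
def faceOrigin {𝒱 : Type*} (f : 𝒱 × 𝒱 × 𝒱) : 𝒱 := f.2.2

/-- The discrete curvature `F_{kji} = U_{ik} U_{kj} U_{ji}` of a pointed oriented face
`f = (k, j, i)`, computed from the discrete gauge field `U`. -/
def faceCurvature {n : ℕ} {𝒱 : Type*}
    (U : 𝒱 → 𝒱 → Matrix.unitaryGroup (Fin n) ℂ) (f : 𝒱 × 𝒱 × 𝒱) :
    Matrix.unitaryGroup (Fin n) ℂ :=
  U f.2.2 f.1 * U f.1 f.2.1 * U f.2.1 f.2.2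

/-- The discrete Yang–Mills action
`S'(U) = Σ_r M_r · Re tr( U_{ḟ₁ʳ ḟ₀ʳ} (1 − F_{f₀ʳ})ᴴ U_{ḟ₀ʳ ḟ₁ʳ} (1 − F_{f₁ʳ}) )`. -/
noncomputable def discreteYMAction {n : ℕ} {𝒱 R : Type*} [Fintype R]
    (f₀ f₁ : R → 𝒱 × 𝒱 × 𝒱) (M : R → ℝ)
    (U : 𝒱 → 𝒱 → Matrix.unitaryGroup (Fin n) ℂ) : ℝ :=
  ∑ r : R, M r *
    (Matrix.trace
      ((U (faceOrigin (f₁ r)) (faceOrigin (f₀ r)) : Matrix (Fin n) (Fin n) ℂ) *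
       (1 - (faceCurvature U (f₀ r) : Matrix (Fin n) (Fin n) ℂ))ᴴ *
       (U (faceOrigin (f₀ r)) (faceOrigin (f₁ r)) : Matrix (Fin n) (Fin n) ℂ) *
       (1 - (faceCurvature U (f₁ r) : Matrix (Fin n) (Fin n) ℂ)))).re

lemma curv_conj {n : ℕ} {𝒱 : Type*}
    (U : 𝒱 → 𝒱 → Matrix.unitaryGroup (Fin n) ℂ)
    (G : 𝒱 → Matrix.unitaryGroup (Fin n) ℂ) (f : 𝒱 × 𝒱 × 𝒱) :
    faceCurvature (fun j i => G j * U j i * (G i)⁻¹) f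
      = G (faceOrigin f) * faceCurvature U f * (G (faceOrigin f))⁻¹ := by
  simp only [faceCurvature, faceOrigin]
  group

/-- Discrete gauge invariance of the simplicial Yang–Mills action: for any discrete gauge
field `U` (unitary parallel transports with `U_{ij} = U_{ji}⁻¹` and `U_{ii} = 1`) and any
discrete gauge transformation `(G_i)`, the gauge transformed field
`U'_{ji} = G_j U_{ji} G_i⁻¹` has the same action as `U`. -/
theorem discreteYMAction_gauge_invariant {n : ℕ} {𝒱 R : Type*} [Fintype R]
    (f₀ f₁ : R → 𝒱 × 𝒱 × 𝒱) (M : R → ℝ)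
    (U : 𝒱 → 𝒱 → Matrix.unitaryGroup (Fin n) ℂ)
    (hUinv : ∀ i j : 𝒱, U i j = (U j i)⁻¹)
    (hUone : ∀ i : 𝒱, U i i = 1)
    (G : 𝒱 → Matrix.unitaryGroup (Fin n) ℂ) :
    discreteYMAction f₀ f₁ M (fun j i => G j * U j i * (G i)⁻¹) =
      discreteYMAction f₀ f₁ M U := by
  unfold discreteYMAction
  refine Finset.sum_congr rfl fun r _ => ?_
  congr 2
  rw [curv_conj, curv_conj]
  set i0 := faceOrigin (f₀ r)
  set i1 := faceOrigin (f₁ r)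
  set g0 : Matrix (Fin n) (Fin n) ℂ := (G i0 : Matrix (Fin n) (Fin n) ℂ)
  set g1 : Matrix (Fin n) (Fin n) ℂ := (G i1 : Matrix (Fin n) (Fin n) ℂ)
  set u01 : Matrix (Fin n) (Fin n) ℂ := (U i0 i1 : Matrix (Fin n) (Fin n) ℂ)
  set u10 : Matrix (Fin n) (Fin n) ℂ := (U i1 i0 : Matrix (Fin n) (Fin n) ℂ)
  set F0 : Matrix (Fin n) (Fin n) ℂ := (faceCurvature U (f₀ r) : Matrix (Fin n) (Fin n) ℂ)
  set F1 : Matrix (Fin n) (Fin n) ℂ := (faceCurvature U (f₁ r) : Matrix (Fin n) (Fin n) ℂ)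
  have sg0 : star g0 * g0 = 1 := (G i0).2.1
  have g0s : g0 * star g0 = 1 := (G i0).2.2
  have sg1 : star g1 * g1 = 1 := (G i1).2.1
  have g1s : g1 * star g1 = 1 := (G i1).2.2
  have key :
      ((G i1 * U i1 i0 * (G i0)⁻¹ : Matrix.unitaryGroup (Fin n) ℂ) : Matrix (Fin n) (Fin n) ℂ) *
        (1 - ((G i0 * faceCurvature U (f₀ r) * (G i0)⁻¹ : Matrix.unitaryGroup (Fin n) ℂ) :
          Matrix (Fin n) (Fin n) ℂ))ᴴ *
        ((G i0 * U i0 i1 * (G i1)⁻¹ : Matrix.unitaryGroup (Fin n) ℂ) : Matrix (Fin n) (Fin n) ℂ) *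
        (1 - ((G i1 * faceCurvature U (f₁ r) * (G i1)⁻¹ : Matrix.unitaryGroup (Fin n) ℂ) :
          Matrix (Fin n) (Fin n) ℂ)) =
      g1 * (u10 * (1 - F0)ᴴ * u01 * (1 - F1)) * star g1 := by
    have coe1 : ((G i1 * U i1 i0 * (G i0)⁻¹ : Matrix.unitaryGroup (Fin n) ℂ) :
        Matrix (Fin n) (Fin n) ℂ) = g1 * u10 * star g0 := rfl
    have coe2 : ((G i0 * faceCurvature U (f₀ r) * (G i0)⁻¹ : Matrix.unitaryGroup (Fin n) ℂ) :
        Matrix (Fin n) (Fin n) ℂ) = g0 * F0 * star g0 := rfl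
    have coe3 : ((G i0 * U i0 i1 * (G i1)⁻¹ : Matrix.unitaryGroup (Fin n) ℂ) :
        Matrix (Fin n) (Fin n) ℂ) = g0 * u01 * star g1 := rfl
    have coe4 : ((G i1 * faceCurvature U (f₁ r) * (G i1)⁻¹ : Matrix.unitaryGroup (Fin n) ℂ) :
        Matrix (Fin n) (Fin n) ℂ) = g1 * F1 * star g1 := rfl
    rw [coe1, coe2, coe3, coe4]
    have h0 : (1 - g0 * F0 * star g0) = g0 * (1 - F0) * star g0 := by
      rw [mul_sub, sub_mul, mul_one, g0s]
    have h1 : (1 - g1 * F1 * star g1) = g1 * (1 - F1) * star g1 := by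
      rw [mul_sub, sub_mul, mul_one, g1s]
    rw [h0, h1]
    simp only [Matrix.star_eq_conjTranspose, Matrix.conjTranspose_mul,
      Matrix.conjTranspose_conjTranspose] at sg0 sg1 ⊢
    simp only [mul_assoc]
    rw [← mul_assoc g0ᴴ g0, sg0, one_mul, ← mul_assoc g0ᴴ g0, sg0, one_mul,
      ← mul_assoc g1ᴴ g1, sg1, one_mul]
  rw [key, Matrix.trace_mul_cycle, ← mul_assoc, Matrix.star_eq_conjTranspose] at *
  rw [show g1ᴴ * g1 = 1 from sg1, one_mul]
end

section
/- Let 𝒱 be a finite vertex set, R a finite index set, (f₀ʳ, f₁ʳ)_{r∈R} pairs of pointed oriented faces with vertexes in 𝒱, and M_r ∈ ℝ. For a discrete gauge field U on 𝒱 and an arbitrary assignment F of an n×n complex matrix F_f to each pointed oriented face f (not necessarily the curvature of U), define L(U,F) = Σ_{r∈R} M_r · Re tr( U_{ḟ₁ʳ ḟ₀ʳ} (1 − F_{f₀ʳ})ᴴ U_{ḟ₀ʳ ḟ₁ʳ} (1 − F_{f₁ʳ}) ). Then for every family (G_i)_{i∈𝒱} of unitary n×n complex matrices, setting U'_{ji}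 = G_j U_{ji} G_i^{-1} and F'_f = G_{ḟ} F_f G_{ḟ}^{-1}, one has L(U',F') = L(U,F). -/
open Matrix

lemma unitaryGroup_conj_trace_aux {n : ℕ} (a b u v : Matrix.unitaryGroup (Fin n) ℂ)
    (x y : Matrix (Fin n) (Fin n) ℂ) :
    Matrix.trace
      (((b * u * a⁻¹ : Matrix.unitaryGroup (Fin n) ℂ) : Matrix (Fin n) (Fin n) ℂ) *
       (1 - (a : Matrix (Fin n) (Fin n) ℂ) * x *
          ((a⁻¹ : Matrix.unitaryGroup (Fin n) ℂ) : Matrix (Fin n) (Fin n) ℂ))ᴴ *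
       ((a * v * b⁻¹ : Matrix.unitaryGroup (Fin n) ℂ) : Matrix (Fin n) (Fin n) ℂ) *
       (1 - (b : Matrix (Fin n) (Fin n) ℂ) * y *
          ((b⁻¹ : Matrix.unitaryGroup (Fin n) ℂ) : Matrix (Fin n) (Fin n) ℂ))) =
    Matrix.trace ((u : Matrix (Fin n) (Fin n) ℂ) * (1 - x)ᴴ *
      (v : Matrix (Fin n) (Fin n) ℂ) * (1 - y)) := by
  have cancel : ∀ (c : Matrix.unitaryGroup (Fin n) ℂ) (Z : Matrix (Fin n) (Fin n) ℂ),
      (c : Matrix (Fin n) (Fin n) ℂ)ᴴ * ((c : Matrix (Fin n) (Fin n) ℂ) * Z) = Z := by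
    intro c Z
    rw [← mul_assoc, ← Matrix.star_eq_conjTranspose, Matrix.UnitaryGroup.star_mul_self, one_mul]
  have ha : (1 : Matrix (Fin n) (Fin n) ℂ) - (a : Matrix (Fin n) (Fin n) ℂ) * x *
      ((a⁻¹ : Matrix.unitaryGroup (Fin n) ℂ) : Matrix (Fin n) (Fin n) ℂ)
      = (a : Matrix (Fin n) (Fin n) ℂ) * (1 - x) * (a : Matrix (Fin n) (Fin n) ℂ)ᴴ := by
    simp only [Matrix.UnitaryGroup.inv_val, Matrix.star_eq_conjTranspose, mul_sub, sub_mul,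
      mul_one]
    rw [← Matrix.star_eq_conjTranspose, (Matrix.mem_unitaryGroup_iff.mp a.2 : _)]
  have hb : (1 : Matrix (Fin n) (Fin n) ℂ) - (b : Matrix (Fin n) (Fin n) ℂ) * y *
      ((b⁻¹ : Matrix.unitaryGroup (Fin n) ℂ) : Matrix (Fin n) (Fin n) ℂ)
      = (b : Matrix (Fin n) (Fin n) ℂ) * (1 - y) * (b : Matrix (Fin n) (Fin n) ℂ)ᴴ := by
    simp only [Matrix.UnitaryGroup.inv_val, Matrix.star_eq_conjTranspose, mul_sub, sub_mul,
      mul_one]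
    rw [← Matrix.star_eq_conjTranspose, (Matrix.mem_unitaryGroup_iff.mp b.2 : _)]
  rw [ha, hb]
  simp only [Matrix.UnitaryGroup.mul_val, Matrix.UnitaryGroup.inv_val,
    Matrix.star_eq_conjTranspose, Matrix.conjTranspose_mul, Matrix.conjTranspose_conjTranspose]
  have key : ∀ W : Matrix (Fin n) (Fin n) ℂ,
      Matrix.trace ((b : Matrix (Fin n) (Fin n) ℂ) * (W * (b : Matrix (Fin n) (Fin n) ℂ)ᴴ))
        = Matrix.trace W := by
    intro W
    rw [Matrix.trace_mul_comm, mul_assoc, ← Matrix.star_eq_conjTranspose, Matrix.UnitaryGroup.star_mul_self, mul_one]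
  calc _ = Matrix.trace ((b : Matrix (Fin n) (Fin n) ℂ) *
        (((u : Matrix (Fin n) (Fin n) ℂ) * (1 - x)ᴴ * (v : Matrix (Fin n) (Fin n) ℂ) * (1 - y)) *
          (b : Matrix (Fin n) (Fin n) ℂ)ᴴ)) := by
        congr 1
        simp only [mul_assoc, cancel]
    _ = _ := key _


/-- The quantity
`L(U,F) = Σ_r M_r · Re tr( U_{ḟ₁ʳ ḟ₀ʳ} (1 − F_{f₀ʳ})ᴴ U_{ḟ₀ʳ ḟ₁ʳ} (1 − F_{f₁ʳ}) )`,
where `F` is an arbitrary assignment of a matrix to each pointed oriented face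
(not necessarily the curvature of `U`). -/
noncomputable def discreteLagrangian {n : ℕ} {𝒱 R : Type*} [Fintype R]
    (f₀ f₁ : R → 𝒱 × 𝒱 × 𝒱) (M : R → ℝ)
    (U : 𝒱 → 𝒱 → Matrix.unitaryGroup (Fin n) ℂ)
    (F : 𝒱 × 𝒱 × 𝒱 → Matrix (Fin n) (Fin n) ℂ) : ℝ :=
  ∑ r : R, M r *
    (Matrix.trace
      ((U (faceOrigin (f₁ r)) (faceOrigin (f₀ r)) : Matrix (Fin n) (Fin n) ℂ) *
       (1 - F (f₀ r))ᴴ *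
       (U (faceOrigin (f₀ r)) (faceOrigin (f₁ r)) : Matrix (Fin n) (Fin n) ℂ) *
       (1 - F (f₁ r)))).re

/-- Discrete gauge invariance of `L(U,F)` for arbitrary face fields `F`: if `U` is a
discrete gauge field (`U_{ij} = U_{ji}⁻¹`, `U_{ii} = 1`) and `G` a family of unitary
matrices, then replacing `U_{ji}` by `G_j U_{ji} G_i⁻¹` and `F_f` by `G_ḟ F_f G_ḟ⁻¹`
leaves `L` unchanged. -/
theorem discreteLagrangian_gauge_invariant {n : ℕ} {𝒱 R : Type*} [Fintype R]
    (f₀ f₁ : R → 𝒱 × 𝒱 × 𝒱) (M : R → ℝ)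
    (U : 𝒱 → 𝒱 → Matrix.unitaryGroup (Fin n) ℂ)
    (hUinv : ∀ i j : 𝒱, U i j = (U j i)⁻¹)
    (hUone : ∀ i : 𝒱, U i i = 1)
    (F : 𝒱 × 𝒱 × 𝒱 → Matrix (Fin n) (Fin n) ℂ)
    (G : 𝒱 → Matrix.unitaryGroup (Fin n) ℂ) :
    discreteLagrangian f₀ f₁ M (fun j i => G j * U j i * (G i)⁻¹)
      (fun f => (G (faceOrigin f) : Matrix (Fin n) (Fin n) ℂ) * F f *
        ((G (faceOrigin f))⁻¹ : Matrix.unitaryGroup (Fin n) ℂ)) =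
      discreteLagrangian f₀ f₁ M U F := by
  unfold discreteLagrangian
  refine Finset.sum_congr rfl fun r _ => ?_
  have := unitaryGroup_conj_trace_aux (G (faceOrigin (f₀ r))) (G (faceOrigin (f₁ r)))
    (U (faceOrigin (f₁ r)) (faceOrigin (f₀ r))) (U (faceOrigin (f₀ r)) (faceOrigin (f₁ r)))
    (F (f₀ r)) (F (f₁ r))
  rw [this]
end

section
/- Let V be a complex inner product space, 𝒱 a finite vertex set, R a finite index set, (e₀ʳ, e₁ʳ)_{r∈R} pairs of oriented edges with vertexes in 𝒱 (an oriented edge e is an ordered pair of vertexes, with origin ė and target ë), and M_r ∈ ℝ. Let U assign to each ordered pair of vertexes (j,i) a unitary operator U_{ji} on V with U_{ij} = U_{ji}^{-1} and U_{ii} = id, write U_e = U_{ë ė}, and let Φ assign a vector Φ_i ∈ V to each vertex i. Define S'(U,Φ) = Σ_{r∈R} M_r · Re⟨ U_{ë₁ʳ ë₀ʳ}(Φ_{ë₀ʳ} − U_{e₀ʳ} Φ_{ė₀ʳ}) , Φ_{ë₁ʳ} − U_{e₁ʳ} Φ_{ė₁ʳ} ⟩. Then for every family (G_i)_{i∈𝒱}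 of unitary operators on V, setting U'_{ji} = G_j U_{ji} G_i^{-1} and Φ'_i = G_i Φ_i, one has S'(U',Φ') = S'(U,Φ). -/
open scoped InnerProductSpace

/-- The discrete action for scalar fields coupled to a lattice gauge field:
`S'(U,Φ) = Σ_r M_r · Re⟨ U_{ë₁ʳ ë₀ʳ}(Φ_{ë₀ʳ} − U_{e₀ʳ} Φ_{ė₀ʳ}) , Φ_{ë₁ʳ} − U_{e₁ʳ} Φ_{ė₁ʳ} ⟩`,
where an oriented edge `e` is an ordered pair `(ė, ë)` (origin, target), and `U_e = U_{ë ė}`. -/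
noncomputable def discreteScalarAction {V : Type*} [NormedAddCommGroup V]
    [InnerProductSpace ℂ V] {𝒱 R : Type*} [Fintype R]
    (e₀ e₁ : R → 𝒱 × 𝒱) (M : R → ℝ)
    (U : 𝒱 → 𝒱 → (V ≃ₗᵢ[ℂ] V)) (Φ : 𝒱 → V) : ℝ :=
  ∑ r : R, M r *
    (⟪U ((e₁ r).2) ((e₀ r).2) (Φ ((e₀ r).2) - U ((e₀ r).2) ((e₀ r).1) (Φ ((e₀ r).1))),
      Φ ((e₁ r).2) - U ((e₁ r).2) ((e₁ r).1) (Φ ((e₁ r).1))⟫_ℂ).re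

section GaugeTransform

variable {R E 𝒱 : Type*} [Semiring R] [SeminormedAddCommGroup E] [Module R E]
  (G : 𝒱 → E ≃ₗᵢ[R] E) (U : 𝒱 → 𝒱 → E ≃ₗᵢ[R] E)

theorem gaugeTransform_transport_apply (j i : 𝒱) (x : E) :
    (G j * U j i * (G i)⁻¹) (G i x) = G j (U j i x) := by
  simp only [LinearIsometryEquiv.coe_mul, LinearIsometryEquiv.coe_inv, Function.comp_apply,
    LinearIsometryEquiv.symm_apply_apply]

theorem gaugeTransform_covariantDifference (Φ : 𝒱 → E) (e : 𝒱 × 𝒱) :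
    G e.2 (Φ e.2) - (G e.2 * U e.2 e.1 * (G e.1)⁻¹) (G e.1 (Φ e.1)) =
      G e.2 (Φ e.2 - U e.2 e.1 (Φ e.1)) := by
  rw [gaugeTransform_transport_apply, map_sub]

end GaugeTransform

theorem discreteScalarAction_gauge_invariant_general {V : Type*} [NormedAddCommGroup V]
    [InnerProductSpace ℂ V] {𝒱 R : Type*} [Fintype R]
    (e₀ e₁ : R → 𝒱 × 𝒱) (M : R → ℝ)
    (U : 𝒱 → 𝒱 → (V ≃ₗᵢ[ℂ] V))
    (Φ : 𝒱 → V) (G : 𝒱 → (V ≃ₗᵢ[ℂ] V)) :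
    discreteScalarAction e₀ e₁ M (fun j i => G j * U j i * (G i)⁻¹)
        (fun i => G i (Φ i)) =
      discreteScalarAction e₀ e₁ M U Φ := by
  refine Finset.sum_congr rfl fun r _ => ?_
  -- Each covariant difference picks up `G` at its target, and the transport carries `G` at
  -- `ë₀` to `G` at `ë₁`, so both arguments of the inner product carry the same isometry.
  rw [gaugeTransform_covariantDifference G U Φ (e₀ r),
    gaugeTransform_covariantDifference G U Φ (e₁ r), gaugeTransform_transport_apply,
    LinearIsometryEquiv.inner_map_map]

/-- Discrete gauge invariance of the scalar field action: if the parallel transports `U`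
are unitary operators with `U_{ij} = U_{ji}⁻¹` and `U_{ii} = id`, then for any family
`(G_i)` of unitary operators, replacing `U_{ji}` by `G_j U_{ji} G_i⁻¹` and `Φ_i` by
`G_i Φ_i` leaves the action unchanged. -/
theorem discreteScalarAction_gauge_invariant {V : Type*} [NormedAddCommGroup V]
    [InnerProductSpace ℂ V] {𝒱 R : Type*} [Fintype R]
    (e₀ e₁ : R → 𝒱 × 𝒱) (M : R → ℝ)
    (U : 𝒱 → 𝒱 → (V ≃ₗᵢ[ℂ] V))
    (hUinv : ∀ i j : 𝒱, U i j = (U j i)⁻¹)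
    (hUone : ∀ i : 𝒱, U i i = 1)
    (Φ : 𝒱 → V) (G : 𝒱 → (V ≃ₗᵢ[ℂ] V)) :
    discreteScalarAction e₀ e₁ M (fun j i => G j * U j i * (G i)⁻¹)
        (fun i => G i (Φ i)) =
      discreteScalarAction e₀ e₁ M U Φ :=
  discreteScalarAction_gauge_invariant_general e₀ e₁ M U Φ G
end

section
/- Let T = {(x,y) ∈ ℝ² : x ≥ 0, y ≥ 0, x + y ≤ 1} be the standard triangle, and let λ_i(x,y) = 1 − x − y, λ_j(x,y) = x, λ_k(x,y) = y be the barycentric coordinates, with constant gradients ∇λ_i = (−1,−1), ∇λ_j = (1,0), ∇λ_k = (0,1). Given n×n complex matrices a_{ji}, a_{kj}, a_{ik}, define the matrix-valued vector field A = (A₁, A₂) on ℝ² by A(x,y) = a_{ji} ⊗ (λ_i ∇λ_j − λ_j ∇λ_i)(x,y) + a_{kj} ⊗ (λ_j ∇λ_k − λ_k ∇λ_j)(x,y) + a_{ik} ⊗ (λ_k ∇λ_i − λ_i ∇λ_k)(x,y), i.e. each matrix coefficient multiplies the corresponding scalar vector field. Then ∫_T ( ∂_x A₂ − ∂_y A₁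 + [A₁, A₂] ) dx dy = (a_{ik} + a_{kj} + a_{ji}) + (1/6)( [a_{ji}, a_{kj}] + [a_{kj}, a_{ik}] + [a_{ik}, a_{ji}] ). -/
open MeasureTheory

/-- The standard triangle `T = {(x,y) : x ≥ 0, y ≥ 0, x + y ≤ 1}`. -/
def stdTriangle : Set (ℝ × ℝ) := {v | 0 ≤ v.1 ∧ 0 ≤ v.2 ∧ v.1 + v.2 ≤ 1}

/-- Barycentric coordinates on the standard triangle. -/
def lamI (v : ℝ × ℝ) : ℝ := 1 - v.1 - v.2
def lamJ (v : ℝ × ℝ) : ℝ := v.1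
def lamK (v : ℝ × ℝ) : ℝ := v.2

/-- Their (constant) gradients. -/
def gradI : ℝ × ℝ := (-1, -1)
def gradJ : ℝ × ℝ := (1, 0)
def gradK : ℝ × ℝ := (0, 1)

/-- The scalar Whitney vector field `λ_a ∇λ_b − λ_b ∇λ_a` attached to an edge `(b, a)`. -/
def whitneyField (lamA lamB : (ℝ × ℝ) → ℝ) (gradA gradB : ℝ × ℝ) (v : ℝ × ℝ) : ℝ × ℝ :=
  lamA v • gradB - lamB v • gradA

/-- First component `A₁` of the Lie-algebra-valued Whitney 1-form
`A = a_{ji} ⊗ (λ_i ∇λ_j − λ_j ∇λ_i) + a_{kj} ⊗ (λ_j ∇λ_k − λ_k ∇λ_j) + a_{ik} ⊗ (λ_k ∇λ_i − λ_i ∇λ_k)`,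
viewed as a pair of matrix-valued functions `(A₁, A₂)`. -/
noncomputable def whitneyA₁ {n : ℕ} (aji akj aik : Matrix (Fin n) (Fin n) ℂ)
    (v : ℝ × ℝ) : Matrix (Fin n) (Fin n) ℂ :=
  ((whitneyField lamI lamJ gradI gradJ v).1 : ℂ) • aji +
  ((whitneyField lamJ lamK gradJ gradK v).1 : ℂ) • akj +
  ((whitneyField lamK lamI gradK gradI v).1 : ℂ) • aik

/-- Second component `A₂` of the Lie-algebra-valued Whitney 1-form. -/
noncomputable def whitneyA₂ {n : ℕ} (aji akj aik : Matrix (Fin n) (Fin n) ℂ)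
    (v : ℝ × ℝ) : Matrix (Fin n) (Fin n) ℂ :=
  ((whitneyField lamI lamJ gradI gradJ v).2 : ℂ) • aji +
  ((whitneyField lamJ lamK gradJ gradK v).2 : ℂ) • akj +
  ((whitneyField lamK lamI gradK gradI v).2 : ℂ) • aik

/-! Explicitly `A₁ = a_{ji} - y • S` and `A₂ = x • S - a_{ik}`, where
`S = a_{ji} + a_{kj} + a_{ik}`. Hence `∂_x A₂ - ∂_y A₁ = 2 S` is constant and, since
`⁅S, S⁆ = 0`, the bracket `⁅A₁, A₂⁆ = ⁅a_{ik}, a_{ji}⁆ + x • ⁅a_{ji}, S⁆ + y • ⁅S, a_{ik}⁆`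
is affine. So the curvature is an affine function on `T`, and its integral follows from
`|T| = 1/2` and `∫_T x = ∫_T y = 1/6`. -/

open Set

theorem setIntegral_prod_fiberwise {α β E : Type*} [MeasurableSpace α] [MeasurableSpace β]
    [NormedAddCommGroup E] [NormedSpace ℝ E] {μ : Measure α} {ν : Measure β}
    [SFinite μ] [SFinite ν] {s : Set α} {t : α → Set β} {f : α × β → E} (hs : MeasurableSet s)
    (hS : MeasurableSet {p : α × β | p.1 ∈ s ∧ p.2 ∈ t p.1})
    (hf : IntegrableOn f {p : α × β | p.1 ∈ s ∧ p.2 ∈ t p.1} (μ.prod ν)) :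
    ∫ p in {p : α × β | p.1 ∈ s ∧ p.2 ∈ t p.1}, f p ∂μ.prod ν
      = ∫ x in s, ∫ y in t x, f (x, y) ∂ν ∂μ := by
  rw [← integral_indicator hS, integral_prod _ ((integrable_indicator_iff hS).2 hf),
    ← integral_indicator hs]
  congr 1 with x
  by_cases hx : x ∈ s
  · have ht : MeasurableSet (t x) := by simpa [hx] using measurable_prodMk_left (x := x) hS
    rw [indicator_of_mem hx, ← integral_indicator ht]
    congr 1 with y
    by_cases hy : y ∈ t x
    · have hxy : (x, y) ∈ {p : α × β | p.1 ∈ s ∧ p.2 ∈ t p.1} := ⟨hx, hy⟩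
      rw [indicator_of_mem hxy, indicator_of_mem hy]
    · rw [indicator_of_notMem (fun h => hy h.2), indicator_of_notMem hy]
  · simp [indicator, hx]

section StdTriangle

theorem stdTriangle_eq :
    stdTriangle = {v : ℝ × ℝ | v.1 ∈ Icc 0 1 ∧ v.2 ∈ Icc 0 (1 - v.1)} := by
  ext ⟨x, y⟩
  simp only [stdTriangle, mem_Icc]
  constructor
  · rintro ⟨hx, hy, hxy⟩
    exact ⟨⟨hx, by linarith⟩, hy, by linarith⟩
  · rintro ⟨⟨hx, -⟩, hy, hxy⟩
    exact ⟨hx, hy, by linarith⟩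

theorem isClosed_stdTriangle : IsClosed stdTriangle :=
  (isClosed_le continuous_const continuous_fst).inter
    ((isClosed_le continuous_const continuous_snd).inter
      (isClosed_le (continuous_fst.add continuous_snd) continuous_const))

theorem isCompact_stdTriangle : IsCompact stdTriangle := by
  have hsub : stdTriangle ⊆ Icc (0 : ℝ) 1 ×ˢ Icc (0 : ℝ) 1 := by
    rintro ⟨x, y⟩ ⟨hx, hy, hxy⟩
    exact ⟨⟨hx, by linarith⟩, hy, by linarith⟩
  exact (isCompact_Icc.prod isCompact_Icc).of_isClosed_subset isClosed_stdTriangle hsub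

variable {E : Type*} [NormedAddCommGroup E] [NormedSpace ℝ E]

theorem setIntegral_stdTriangle {f : ℝ × ℝ → E} (hf : Continuous f) :
    ∫ v in stdTriangle, f v = ∫ x in (0 : ℝ)..1, ∫ y in (0 : ℝ)..(1 - x), f (x, y) := by
  have hT := stdTriangle_eq ▸ isClosed_stdTriangle.measurableSet
  rw [stdTriangle_eq, Measure.volume_eq_prod,
    setIntegral_prod_fiberwise (t := fun x => Icc 0 (1 - x)) measurableSet_Icc hT
      (stdTriangle_eq ▸ hf.continuousOn.integrableOn_compact isCompact_stdTriangle),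
    intervalIntegral.integral_of_le zero_le_one, ← integral_Icc_eq_integral_Ioc]
  refine setIntegral_congr_fun measurableSet_Icc fun x hx => ?_
  rw [intervalIntegral.integral_of_le (by linarith [hx.2]), integral_Icc_eq_integral_Ioc]

theorem measureReal_stdTriangle : volume.real stdTriangle = 1 / 2 := by
  have h := setIntegral_stdTriangle (continuous_const (y := (1 : ℝ)))
  norm_num [intervalIntegral.integral_comp_sub_left (fun x => x)] at h
  exact h

theorem integral_stdTriangle_fst : ∫ v in stdTriangle, v.1 = 1 / 6 := by
  rw [setIntegral_stdTriangle continuous_fst]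
  norm_num [sub_mul, intervalIntegral.integral_sub, ← pow_two]

theorem integral_stdTriangle_snd : ∫ v in stdTriangle, v.2 = 1 / 6 := by
  rw [setIntegral_stdTriangle continuous_snd]
  norm_num [intervalIntegral.integral_comp_sub_left (fun x => x ^ 2)]

theorem integral_stdTriangle_affine [CompleteSpace E] (c u w : E) :
    ∫ v in stdTriangle, c + v.1 • u + v.2 • w = (1 / 2 : ℝ) • c + (1 / 6 : ℝ) • (u + w) := by
  have hint {g : ℝ × ℝ → E} (hg : Continuous g) : IntegrableOn g stdTriangle :=
    hg.continuousOn.integrableOn_compact isCompact_stdTriangle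
  rw [integral_add (hint (g := fun v => c + v.1 • u) (by fun_prop)) (hint (by fun_prop)),
    integral_add (hint continuous_const) (hint (by fun_prop)), setIntegral_const,
    integral_smul_const, integral_smul_const, measureReal_stdTriangle, integral_stdTriangle_fst,
    integral_stdTriangle_snd, smul_add, add_assoc]

end StdTriangle

section Whitney

variable {n : ℕ} (aji akj aik : Matrix (Fin n) (Fin n) ℂ)

theorem whitneyA₁_eq (v : ℝ × ℝ) : whitneyA₁ aji akj aik v = aji - v.2 • (aji + akj + aik) := by
  simp only [whitneyA₁, whitneyField, lamI, lamJ, lamK, gradI, gradJ, gradK, Prod.smul_mk,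
    Prod.mk_sub_mk, smul_eq_mul, Complex.coe_smul]
  module

theorem whitneyA₂_eq (v : ℝ × ℝ) : whitneyA₂ aji akj aik v = v.1 • (aji + akj + aik) - aik := by
  simp only [whitneyA₂, whitneyField, lamI, lamJ, lamK, gradI, gradJ, gradK, Prod.smul_mk,
    Prod.mk_sub_mk, smul_eq_mul, Complex.coe_smul]
  module

theorem deriv_whitneyA₂_fst (p q : Fin n) (x y : ℝ) :
    deriv (fun t : ℝ => whitneyA₂ aji akj aik (t, y) p q) x = (aji + akj + aik) p q := by
  simp only [whitneyA₂_eq, Matrix.sub_apply, Matrix.smul_apply]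
  simpa using (((hasDerivAt_id x).smul_const ((aji + akj + aik) p q)).sub_const (aik p q)).deriv

theorem deriv_whitneyA₁_snd (p q : Fin n) (x y : ℝ) :
    deriv (fun t : ℝ => whitneyA₁ aji akj aik (x, t) p q) y = -(aji + akj + aik) p q := by
  simp only [whitneyA₁_eq, Matrix.sub_apply, Matrix.smul_apply]
  simpa using (((hasDerivAt_id y).smul_const ((aji + akj + aik) p q)).const_sub (aji p q)).deriv

theorem lie_whitneyA₁_whitneyA₂ (v : ℝ × ℝ) :
    ⁅whitneyA₁ aji akj aik v, whitneyA₂ aji akj aik v⁆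
      = ⁅aik, aji⁆ + v.1 • ⁅aji, aji + akj + aik⁆ + v.2 • ⁅aji + akj + aik, aik⁆ := by
  rw [whitneyA₁_eq, whitneyA₂_eq]
  simp only [Ring.lie_def, sub_mul, mul_sub, add_mul, mul_add, smul_mul_assoc, mul_smul_comm]
  module

end Whitney

/-- Integral over the standard triangle of the curvature
`∂_x A₂ − ∂_y A₁ + [A₁, A₂]` of the Whitney 1-form with matrix coefficients
`a_{ji}, a_{kj}, a_{ik}`, computed entrywise:
`∫_T F(A) = (a_{ik} + a_{kj} + a_{ji}) + (1/6)([a_{ji},a_{kj}] + [a_{kj},a_{ik}] + [a_{ik},a_{ji}])`. -/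
theorem integral_curvature_whitney {n : ℕ}
    (aji akj aik : Matrix (Fin n) (Fin n) ℂ) (p q : Fin n) :
    (∫ v in stdTriangle,
        (deriv (fun t : ℝ => whitneyA₂ aji akj aik (t, v.2) p q) v.1
          - deriv (fun t : ℝ => whitneyA₁ aji akj aik (v.1, t) p q) v.2
          + (whitneyA₁ aji akj aik v * whitneyA₂ aji akj aik v
              - whitneyA₂ aji akj aik v * whitneyA₁ aji akj aik v) p q)) =
      ((aik + akj + aji) +
        ((1 : ℂ)/6) • (⁅aji, akj⁆ + ⁅akj, aik⁆ + ⁅aik, aji⁆)) p q := by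
  set S := aji + akj + aik
  have integrand_eq (v : ℝ × ℝ) :
      deriv (fun t : ℝ => whitneyA₂ aji akj aik (t, v.2) p q) v.1
          - deriv (fun t : ℝ => whitneyA₁ aji akj aik (v.1, t) p q) v.2
          + (whitneyA₁ aji akj aik v * whitneyA₂ aji akj aik v
              - whitneyA₂ aji akj aik v * whitneyA₁ aji akj aik v) p q
        = (2 • S + ⁅aik, aji⁆) p q + v.1 • ⁅aji, S⁆ p q + v.2 • ⁅S, aik⁆ p q := by
    rw [deriv_whitneyA₂_fst, deriv_whitneyA₁_snd, ← Ring.lie_def, lie_whitneyA₁_whitneyA₂]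
    simp only [S, Matrix.add_apply, Matrix.smul_apply, two_smul]
    ring
  have coefficients_eq : (1 / 2 : ℝ) • (2 • S + ⁅aik, aji⁆) + (1 / 6 : ℝ) • (⁅aji, S⁆ + ⁅S, aik⁆)
      = (aik + akj + aji) + ((1 : ℂ) / 6) • (⁅aji, akj⁆ + ⁅akj, aik⁆ + ⁅aik, aji⁆) := by
    simp only [S, Ring.lie_def, mul_add, add_mul]
    module
  simp_rw [integrand_eq, integral_stdTriangle_affine, ← coefficients_eq]
  simp only [Matrix.add_apply, Matrix.smul_apply]
end

section
/- There exists a constant C > 0, depending only on n and the chosen norm, such that for every h ∈ (0,1] and all n×n complex matrices a, b, c with ‖a‖ ≤ h, ‖b‖ ≤ h, ‖c‖ ≤ h and ‖a + b + c‖ ≤ h², one has ‖ (1 − exp(−a)·exp(−b)·exp(−c)) − ( (a + b + c) + (1/6)( [c,b] + [b,a] + [a,c] ) ) ‖ ≤ C h³. -/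
/-!
Uniformly for `‖x‖ ≤ h ≤ 1`, the exponential series gives `exp (-x) = 1 - x + x²/2 + O(h³)`.
Second-order expansions of this shape multiply, so with `s = a + b + c`,
`e⁻ᵃ e⁻ᵇ e⁻ᶜ = 1 - s + (a²/2 + b²/2 + ab + c²/2 + (a + b)c) + O(h³)`.
What is left of the deficit is the quadratic polynomial `-s²/2 + (2/3)[s, a] + (1/3)[s, b]`:
every term contains `s = O(h²)`, so it is `O(h³)`. The uniformity in `(h, a, b, c)` is
expressed as a Big-O estimate along the principal filter of admissible tuples.
-/

attribute [local instance]
  Matrix.frobeniusNormedAddCommGroup Matrix.frobeniusNormedRing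
  Matrix.frobeniusNormedSpace Matrix.frobeniusNormedAlgebra

open NormedSpace

open scoped Nat
open Finset Filter Asymptotics

section

variable {α 𝔸 : Type*} [NormedRing 𝔸] {l : Filter α} {h : α → ℝ}

theorem isBigO_pow_pow_of_le (hh : h =O[l] fun _ => (1 : ℝ)) {m n : ℕ} (hmn : m ≤ n) :
    (fun i => h i ^ n) =O[l] fun i => h i ^ m := by
  have := (isBigO_refl (fun i => h i ^ m) l).mul (hh.pow (n - m))
  simpa [← pow_add, Nat.add_sub_cancel' hmn] using this

theorem Asymptotics.IsBigO.mul_pow_of_le_add {f g : α → 𝔸} {j k n : ℕ}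
    (hf : f =O[l] fun i => h i ^ j) (hg : g =O[l] fun i => h i ^ k)
    (hh : h =O[l] fun _ => (1 : ℝ)) (hn : n ≤ j + k) :
    (fun i => f i * g i) =O[l] fun i => h i ^ n :=
  (hf.mul hg).trans (by simpa only [← pow_add] using isBigO_pow_pow_of_le hh hn)

theorem isBigO_mul_sub_quadratic {X Y x y q r : α → 𝔸} (hh : h =O[l] fun _ => (1 : ℝ))
    (hx : x =O[l] fun i => h i ^ 1) (hy : y =O[l] fun i => h i ^ 1)
    (hq : q =O[l] fun i => h i ^ 2) (hr : r =O[l] fun i => h i ^ 2)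
    (hX : (fun i => X i - (1 - x i + q i)) =O[l] fun i => h i ^ 3)
    (hY : (fun i => Y i - (1 - y i + r i)) =O[l] fun i => h i ^ 3) :
    (fun i => X i * Y i - (1 - (x i + y i) + (q i + r i + x i * y i))) =O[l]
      fun i => h i ^ 3 := by
  have hlow {f : α → 𝔸} {m n : ℕ} (hmn : m ≤ n) (hf : f =O[l] fun i => h i ^ n) :
      f =O[l] fun i => h i ^ m :=
    hf.trans (isBigO_pow_pow_of_le hh hmn)
  have hone : (fun _ => (1 : 𝔸)) =O[l] fun i => h i ^ 0 := by
    simpa using isBigO_const_const (1 : 𝔸) (one_ne_zero' ℝ) l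
  have hQ (z s : α → 𝔸) (hz : z =O[l] fun i => h i ^ 1) (hs : s =O[l] fun i => h i ^ 2) :
      (fun i => 1 - z i + s i) =O[l] fun i => h i ^ 0 :=
    (hone.sub (hlow (by norm_num) hz)).add (hlow (by norm_num) hs)
  have hYb : Y =O[l] fun i => h i ^ 0 := by
    simpa using (hlow (by norm_num) hY).add (hQ y r hy hr)
  have key : ∀ i, X i * Y i - (1 - (x i + y i) + (q i + r i + x i * y i)) =
      (X i - (1 - x i + q i)) * Y i + (1 - x i + q i) * (Y i - (1 - y i + r i))
        - x i * r i - q i * y i + q i * r i := fun i => by noncomm_ring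
  simp only [key]
  refine ((((hX.mul_pow_of_le_add hYb hh ?_).add ((hQ x q hx hq).mul_pow_of_le_add hY hh ?_)).sub
    (hx.mul_pow_of_le_add hr hh ?_)).sub (hq.mul_pow_of_le_add hy hh ?_)).add
    (hq.mul_pow_of_le_add hr hh ?_) <;> norm_num

variable {𝕂 : Type*} [RCLike 𝕂] [NormedAlgebra 𝕂 𝔸] [CompleteSpace 𝔸]

theorem norm_exp_sub_sum_range_le (x : 𝔸) {m : ℕ} (hm : m ≠ 0) :
    ‖exp x - ∑ k ∈ range m, (k ! : 𝕂)⁻¹ • x ^ k‖ ≤ ‖x‖ ^ m * Real.exp ‖x‖ := by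
  rw [← (exp_series_hasSum_exp' (𝕂 := 𝕂) x).tsum_eq,
    ← (expSeries_summable' (𝕂 := 𝕂) x).sum_add_tsum_nat_add m, add_sub_cancel_left]
  have hexp : HasSum (fun k => ‖x‖ ^ k / k !) (Real.exp ‖x‖) := by
    rw [Real.exp_eq_exp_ℝ]; exact expSeries_div_hasSum_exp ‖x‖
  refine tsum_of_norm_bounded (hexp.mul_left (‖x‖ ^ m)) fun k => ?_
  calc ‖((k + m)! : 𝕂)⁻¹ • x ^ (k + m)‖
      ≤ ((k + m)! : ℝ)⁻¹ * ‖x‖ ^ (k + m) := by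
        rw [norm_smul, norm_inv, RCLike.norm_natCast]
        gcongr
        exact norm_pow_le' x (by omega)
    _ ≤ (k ! : ℝ)⁻¹ * ‖x‖ ^ (k + m) := by
        gcongr
        exact Nat.le_add_right k m
    _ = ‖x‖ ^ m * (‖x‖ ^ k / k !) := by ring

theorem isBigO_exp_neg_sub_quadratic {x : α → 𝔸} (hh : h =O[l] fun _ => (1 : ℝ))
    (hx : x =O[l] h) :
    (fun i => exp (-x i) - (1 - x i + (2 : 𝕂)⁻¹ • x i ^ 2)) =O[l] fun i => h i ^ 3 := by
  have htaylor (z : 𝔸) :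
      ∑ k ∈ range 3, (k ! : 𝕂)⁻¹ • (-z) ^ k = 1 - z + (2 : 𝕂)⁻¹ • z ^ 2 := by
    simp [sum_range_succ, sub_eq_add_neg]
  obtain ⟨C, hC⟩ := (hx.trans hh).bound
  have hcubic : (fun i => exp (-x i) - (1 - x i + (2 : 𝕂)⁻¹ • x i ^ 2)) =O[l]
      fun i => ‖x i‖ ^ 3 := by
    refine IsBigO.of_bound (Real.exp C) (hC.mono fun i hi => ?_)
    have := norm_exp_sub_sum_range_le (𝕂 := 𝕂) (-x i) three_ne_zero
    rw [htaylor, norm_neg] at this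
    rw [norm_pow, norm_norm, mul_comm]
    exact this.trans (by gcongr; simpa using hi)
  exact hcubic.trans (hx.norm_left.pow 3)

theorem isBigO_wilson_deficit {a b c : α → 𝔸} (hh : h =O[l] fun _ => (1 : ℝ))
    (ha : a =O[l] h) (hb : b =O[l] h) (hc : c =O[l] h)
    (hs : (fun i => a i + b i + c i) =O[l] fun i => h i ^ 2) :
    (fun i => (1 - exp (-a i) * exp (-b i) * exp (-c i)) -
      ((a i + b i + c i) + ((1 : 𝕂) / 6) • (⁅c i, b i⁆ + ⁅b i, a i⁆ + ⁅a i, c i⁆))) =O[l]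
      fun i => h i ^ 3 := by
  have hlin {x : α → 𝔸} (hx : x =O[l] h) : x =O[l] fun i => h i ^ 1 := by simpa using hx
  have hsq {x : α → 𝔸} (hx : x =O[l] h) :
      (fun i => (2 : 𝕂)⁻¹ • x i ^ 2) =O[l] fun i => h i ^ 2 := by
    simpa [pow_two, Pi.smul_def] using
      ((hlin hx).mul_pow_of_le_add (hlin hx) hh le_rfl).const_smul_left (2 : 𝕂)⁻¹
  have hab := isBigO_mul_sub_quadratic hh (hlin ha) (hlin hb) (hsq ha) (hsq hb)
    (isBigO_exp_neg_sub_quadratic hh ha) (isBigO_exp_neg_sub_quadratic hh hb)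
  have habc := isBigO_mul_sub_quadratic hh ((hlin ha).add (hlin hb)) (hlin hc)
    (((hsq ha).add (hsq hb)).add ((hlin ha).mul_pow_of_le_add (hlin hb) hh le_rfl)) (hsq hc)
    hab (isBigO_exp_neg_sub_quadratic hh hc)
  have hcomm {x : α → 𝔸} (hx : x =O[l] h) :
      (fun i => (a i + b i + c i) * x i - x i * (a i + b i + c i)) =O[l] fun i => h i ^ 3 :=
    (hs.mul_pow_of_le_add (hlin hx) hh le_rfl).sub ((hlin hx).mul_pow_of_le_add hs hh le_rfl)
  have key : ∀ i, (1 - exp (-a i) * exp (-b i) * exp (-c i)) -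
      ((a i + b i + c i) + ((1 : 𝕂) / 6) • (⁅c i, b i⁆ + ⁅b i, a i⁆ + ⁅a i, c i⁆)) =
      -(exp (-a i) * exp (-b i) * exp (-c i) - (1 - (a i + b i + c i) +
          ((2 : 𝕂)⁻¹ • a i ^ 2 + (2 : 𝕂)⁻¹ • b i ^ 2 + a i * b i + (2 : 𝕂)⁻¹ • c i ^ 2 +
            (a i + b i) * c i)))
        - (2 : 𝕂)⁻¹ • ((a i + b i + c i) * (a i + b i + c i))
        + (2 / 3 : 𝕂) • ((a i + b i + c i) * a i - a i * (a i + b i + c i))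
        + (1 / 3 : 𝕂) • ((a i + b i + c i) * b i - b i * (a i + b i + c i)) := fun i => by
    simp only [Ring.lie_def, pow_two, mul_add, add_mul, smul_add, smul_sub]
    module
  simp only [key]
  have hss := hs.mul_pow_of_le_add hs hh (n := 3) (by norm_num)
  exact ((habc.neg_left.sub (hss.const_smul_left (2 : 𝕂)⁻¹ :)).add
    ((hcomm ha).const_smul_left (2 / 3 : 𝕂) :)).add ((hcomm hb).const_smul_left (1 / 3 : 𝕂) :)

end

/-- Wilson-loop deficit versus integrated curvature, with `‖·‖` the (submultiplicative)
Frobenius norm: there is `C > 0` depending only on `n` (and the norm) such that for all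
`h ∈ (0,1]` and matrices `a, b, c` of norm at most `h` with `‖a + b + c‖ ≤ h²`,
`‖(1 − e^{−a} e^{−b} e^{−c}) − ((a+b+c) + (1/6)([c,b] + [b,a] + [a,c]))‖ ≤ C h³`. -/
theorem wilson_deficit_consistency (n : ℕ) :
    ∃ C : ℝ, 0 < C ∧ ∀ h : ℝ, h ∈ Set.Ioc (0 : ℝ) 1 →
      ∀ a b c : Matrix (Fin n) (Fin n) ℂ,
        ‖a‖ ≤ h → ‖b‖ ≤ h → ‖c‖ ≤ h → ‖a + b + c‖ ≤ h ^ 2 →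
        ‖(1 - exp (-a) * exp (-b) * exp (-c)) -
            ((a + b + c) + ((1 : ℂ)/6) • (⁅c, b⁆ + ⁅b, a⁆ + ⁅a, c⁆))‖ ≤ C * h ^ 3 := by
  let S : Set (ℝ × Matrix (Fin n) (Fin n) ℂ × Matrix (Fin n) (Fin n) ℂ ×
      Matrix (Fin n) (Fin n) ℂ) :=
    {p | p.1 ∈ Set.Ioc 0 1 ∧ ‖p.2.1‖ ≤ p.1 ∧ ‖p.2.2.1‖ ≤ p.1 ∧ ‖p.2.2.2‖ ≤ p.1 ∧
      ‖p.2.1 + p.2.2.1 + p.2.2.2‖ ≤ p.1 ^ 2}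
  have hbound {f : _ → Matrix (Fin n) (Fin n) ℂ} {g : _ → ℝ} (hfg : ∀ p ∈ S, ‖f p‖ ≤ g p) :
      f =O[𝓟 S] g :=
    IsBigO.of_bound' (eventually_principal.2 fun p hp => (hfg p hp).trans (Real.le_norm_self _))
  have hh : (fun p => p.1) =O[𝓟 S] fun _ => (1 : ℝ) :=
    IsBigO.of_bound' (eventually_principal.2 fun p hp => by
      simpa [abs_of_pos hp.1.1] using hp.1.2)
  obtain ⟨C, hC⟩ := isBigO_principal.1 (isBigO_wilson_deficit (𝕂 := ℂ) hh
    (hbound fun p hp => hp.2.1) (hbound fun p hp => hp.2.2.1) (hbound fun p hp => hp.2.2.2.1)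
    (hbound fun p hp => hp.2.2.2.2))
  refine ⟨max C 1, by positivity, fun h hI a b c ha hb hc hs => ?_⟩
  have hh3 : 0 ≤ h ^ 3 := pow_nonneg hI.1.le 3
  calc _ ≤ C * ‖h ^ 3‖ := hC (h, a, b, c) ⟨hI, ha, hb, hc, hs⟩
    _ ≤ max C 1 * h ^ 3 := by
      rw [Real.norm_of_nonneg hh3]
      exact mul_le_mul_of_nonneg_right (le_max_left _ _) hh3
end

section
/- Let Ψ : (a,b,c) ↦ exp(−a)·exp(−b)·exp(−c) and define Θ : (x,a,b,c) ↦ exp(−x)·Ψ(a,b,c)·exp(x) on n×n complex matrices. Then Θ is Fréchet differentiable, and there exists a constant C > 0, depending only on n and the chosen norm, such that for every h ∈ (0,1], all n×n complex matrices x, a, b, c with ‖x‖ ≤ h, ‖a‖ ≤ h, ‖b‖ ≤ h, ‖c‖ ≤ h and ‖a + b + c‖ ≤ h², and all n×n complex matrices x', a', b', c': ‖ DΘ(x,a,b,c)(x',a',b',c') − DΨ(a,b,c)(a',b',c') ‖ ≤ C ( h·‖a' + b' + c'‖ + h²·(‖x'‖ + ‖a'‖ + ‖b'‖ + ‖c'‖)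 ). -/
attribute [local instance]
  Matrix.frobeniusNormedAddCommGroup Matrix.frobeniusNormedRing
  Matrix.frobeniusNormedSpace Matrix.frobeniusNormedAlgebra

open NormedSpace

/-- The face holonomy `Ψ(a,b,c) = e^{−a} e^{−b} e^{−c}`. -/
noncomputable def holonomyPsi (n : ℕ)
    (p : Matrix (Fin n) (Fin n) ℂ × Matrix (Fin n) (Fin n) ℂ × Matrix (Fin n) (Fin n) ℂ) :
    Matrix (Fin n) (Fin n) ℂ :=
  exp (-p.1) * exp (-p.2.1) * exp (-p.2.2)

/-- The parallel-transported face holonomy `Θ(x,a,b,c) = e^{−x} Ψ(a,b,c) e^{x}`. -/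
noncomputable def transportedPsi (n : ℕ)
    (q : Matrix (Fin n) (Fin n) ℂ × Matrix (Fin n) (Fin n) ℂ ×
      Matrix (Fin n) (Fin n) ℂ × Matrix (Fin n) (Fin n) ℂ) :
    Matrix (Fin n) (Fin n) ℂ :=
  exp (-q.1) * holonomyPsi n q.2 * exp q.1

/-!
Let `D(x,a,b,c) = Θ(x,a,b,c) - Ψ(a,b,c)`. Since `e^{-x} e^{x} = 1`,
`D = e^{-x} ((Ψ - 1)(e^x - 1) - (e^x - 1)(Ψ - 1))`, and when `x, a, b, c` are `O(h)` we have
`‖e^x - 1‖ = O(h)` and, expanding the three exponentials to second order,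
`‖Ψ - 1‖ = O(h² + ‖a + b + c‖)`; so `‖D‖ = O(h (h² + ‖a + b + c‖))` there.
As `D` is holomorphic, the Cauchy estimate for `z ↦ D(q + z q')` on the circle of radius
`h / N`, `N = ‖x'‖ + ‖a'‖ + ‖b'‖ + ‖c'‖`, which keeps every argument `O(h)` and moves `a + b + c`
by at most `h ‖a' + b' + c'‖ / N`, turns this into the bound on `DD(q) q'`.
-/

open Finset Nat

theorem Real.hasSum_pow_div_factorial (t : ℝ) :
    HasSum (fun m => t ^ m / (m ! : ℝ)) (Real.exp t) := by
  rw [Real.exp_eq_exp_ℝ]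
  exact expSeries_div_hasSum_exp t

namespace NormedSpace

variable {𝔸 : Type*} [NormedRing 𝔸] [NormedAlgebra ℂ 𝔸] [CompleteSpace 𝔸]

@[fun_prop]
theorem differentiable_exp : Differentiable ℂ (exp : 𝔸 → 𝔸) :=
  fun y => (exp_analytic (𝕂 := ℂ) y).differentiableAt

theorem exp_neg_mul_exp (y : 𝔸) : exp (-y) * exp y = 1 := by
  rw [← exp_add_of_commute_of_mem_ball (𝕂 := ℂ) (Commute.refl y).neg_left
    ((expSeries_radius_eq_top ℂ 𝔸).symm ▸ edist_lt_top _ _)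
    ((expSeries_radius_eq_top ℂ 𝔸).symm ▸ edist_lt_top _ _), neg_add_cancel, exp_zero]

theorem norm_exp_sub_sum_range_le (y : 𝔸) {k : ℕ} (hk : k ≠ 0) :
    ‖exp y - ∑ i ∈ range k, ((i ! : ℂ)⁻¹ • y ^ i)‖ ≤ ‖y‖ ^ k * Real.exp ‖y‖ := by
  have htail : HasSum (fun m => ((m + k)! : ℂ)⁻¹ • y ^ (m + k))
      (exp y - ∑ i ∈ range k, ((i ! : ℂ)⁻¹ • y ^ i)) :=
    (hasSum_nat_add_iff' k).mpr (exp_series_hasSum_exp' y)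
  refine htail.norm_le_of_bounded ((Real.hasSum_pow_div_factorial ‖y‖).mul_left (‖y‖ ^ k))
    fun m => ?_
  rw [norm_smul, norm_inv, Complex.norm_natCast, mul_div_assoc', mul_comm, ← pow_add, add_comm k,
    div_eq_mul_inv]
  gcongr
  · exact norm_pow_le' y (by omega)
  · omega

theorem norm_exp_sub_one_le (y : 𝔸) : ‖exp y - 1‖ ≤ ‖y‖ * Real.exp ‖y‖ := by
  simpa using norm_exp_sub_sum_range_le y one_ne_zero

theorem norm_exp_sub_one_sub_le (y : 𝔸) : ‖exp y - 1 - y‖ ≤ ‖y‖ ^ 2 * Real.exp ‖y‖ := by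
  simpa [sum_range_succ, sub_sub] using norm_exp_sub_sum_range_le y two_ne_zero

end NormedSpace

section NearIdentity

variable {R : Type*}

theorem mul_mul_sub_eq_of_mul_eq_one [Ring R] {u' u : R} (h : u' * u = 1) (g : R) :
    u' * g * u - g = u' * ((g - 1) * (u - 1) - (u - 1) * (g - 1)) :=
  calc u' * g * u - g = u' * g * u - u' * u * g := by rw [h, one_mul]
    _ = _ := by noncomm_ring

theorem mul_mul_sub_one_eq [Ring R] (u v w a b c : R) :
    u * v * w - 1 = (u - 1) * ((v - 1) * (w - 1) + (v - 1) + (w - 1)) + (v - 1) * (w - 1)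
      + (u - 1 + a) + (v - 1 + b) + (w - 1 + c) - (a + b + c) := by
  noncomm_ring

theorem norm_mul_mul_sub_le_of_mul_eq_one [NormedRing R] {u' u : R} (h : u' * u = 1) (g : R) :
    ‖u' * g * u - g‖ ≤ 2 * ‖u'‖ * ‖u - 1‖ * ‖g - 1‖ := by
  rw [mul_mul_sub_eq_of_mul_eq_one h]
  calc _ ≤ ‖u'‖ * (‖g - 1‖ * ‖u - 1‖ + ‖u - 1‖ * ‖g - 1‖) :=
        (norm_mul_le _ _).trans <| mul_le_mul_of_nonneg_left
          (norm_sub_le_of_le (norm_mul_le _ _) (norm_mul_le _ _)) (norm_nonneg _)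
    _ = _ := by ring

theorem norm_mul_mul_sub_one_le [NormedRing R] {u v w a b c : R} {t δ : ℝ}
    (hu : ‖u - 1‖ ≤ t) (hv : ‖v - 1‖ ≤ t) (hw : ‖w - 1‖ ≤ t)
    (hua : ‖u - 1 + a‖ ≤ δ) (hvb : ‖v - 1 + b‖ ≤ δ) (hwc : ‖w - 1 + c‖ ≤ δ) :
    ‖u * v * w - 1‖ ≤ t ^ 2 * (t + 3) + 3 * δ + ‖a + b + c‖ := by
  have ht : 0 ≤ t := (norm_nonneg _).trans hu
  have hvw : ‖(v - 1) * (w - 1)‖ ≤ t * t :=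
    (norm_mul_le _ _).trans (mul_le_mul hv hw (norm_nonneg _) ht)
  have hfirst : ‖(u - 1) * ((v - 1) * (w - 1) + (v - 1) + (w - 1))‖ ≤ t * (t * t + t + t) :=
    (norm_mul_le _ _).trans (mul_le_mul hu (norm_add₃_le.trans (by gcongr)) (norm_nonneg _) ht)
  rw [mul_mul_sub_one_eq u v w a b c]
  refine (norm_sub_le_of_le (norm_add_le_of_le (norm_add_le_of_le (norm_add_le_of_le
    (norm_add_le_of_le hfirst hvw) hua) hvb) hwc) le_rfl).trans_eq ?_
  ring

end NearIdentity

theorem norm_fderiv_apply_le_of_forall_norm_le {E F : Type*} [NormedAddCommGroup E]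
    [NormedSpace ℂ E] [NormedAddCommGroup F] [NormedSpace ℂ F] {f : E → F}
    (hf : Differentiable ℂ f) (q v : E) {r C : ℝ} (hr : 0 < r)
    (hC : ∀ z : ℂ, ‖z‖ = r → ‖f (q + z • v)‖ ≤ C) : ‖fderiv ℂ f q v‖ ≤ C / r := by
  have hline : HasDerivAt (fun z : ℂ => f (q + z • v)) (fderiv ℂ f q v) 0 := by
    have := ((hasDerivAt_id (0 : ℂ)).smul_const v).const_add q
    simp only [id, one_smul] at this
    exact (hf q).hasFDerivAt.comp_hasDerivAt_of_eq 0 this (by simp)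
  rw [← hline.deriv]
  refine Complex.norm_deriv_le_of_forall_mem_sphere_norm_le hr
    (hf.comp ((differentiable_const q).add (differentiable_id.smul_const v))).diffContOnCl
    fun z hz => hC z ?_
  simpa using hz

section Holonomy

variable {𝔸 : Type*} [NormedRing 𝔸] [NormedAlgebra ℂ 𝔸] [CompleteSpace 𝔸]

theorem norm_exp_neg_mul_exp_neg_mul_exp_neg_sub_one_le {a b c : 𝔸} {ρ R : ℝ}
    (ha : ‖a‖ ≤ ρ) (hb : ‖b‖ ≤ ρ) (hc : ‖c‖ ≤ ρ) (hρR : ρ ≤ R) :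
    ‖exp (-a) * exp (-b) * exp (-c) - 1‖ ≤
      ρ ^ 2 * (Real.exp R ^ 2 * (R * Real.exp R + 3) + 3 * Real.exp R) + ‖a + b + c‖ := by
  have hρ : 0 ≤ ρ := (norm_nonneg _).trans ha
  have hlin : ∀ y : 𝔸, ‖y‖ ≤ ρ → ‖exp (-y) - 1‖ ≤ ρ * Real.exp R := fun y hy =>
    (norm_exp_sub_one_le (-y)).trans (by rw [norm_neg]; gcongr; linarith)
  have hquad : ∀ y : 𝔸, ‖y‖ ≤ ρ → ‖exp (-y) - 1 + y‖ ≤ ρ ^ 2 * Real.exp R := fun y hy => by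
    rw [← sub_neg_eq_add]
    exact (norm_exp_sub_one_sub_le (-y)).trans (by rw [norm_neg]; gcongr; linarith)
  refine (norm_mul_mul_sub_one_le (hlin a ha) (hlin b hb) (hlin c hc)
    (hquad a ha) (hquad b hb) (hquad c hc)).trans ?_
  have : ρ * Real.exp R ≤ R * Real.exp R := by gcongr
  calc _ ≤ (ρ * Real.exp R) ^ 2 * (R * Real.exp R + 3) + 3 * (ρ ^ 2 * Real.exp R)
          + ‖a + b + c‖ := by gcongr
    _ = _ := by ring

noncomputable def holonomyDefect (q : 𝔸 × 𝔸 × 𝔸 × 𝔸) : 𝔸 :=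
  exp (-q.1) * (exp (-q.2.1) * exp (-q.2.2.1) * exp (-q.2.2.2)) * exp q.1 -
    exp (-q.2.1) * exp (-q.2.2.1) * exp (-q.2.2.2)

theorem differentiable_holonomyDefect :
    Differentiable ℂ (holonomyDefect : 𝔸 × 𝔸 × 𝔸 × 𝔸 → 𝔸) := by
  unfold holonomyDefect
  fun_prop

theorem exists_norm_holonomyDefect_le : ∃ C > 0, ∀ h : ℝ, 0 ≤ h → h ≤ 1 → ∀ x a b c : 𝔸,
    ‖x‖ ≤ 2 * h → ‖a‖ ≤ 2 * h → ‖b‖ ≤ 2 * h → ‖c‖ ≤ 2 * h →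
      ‖holonomyDefect (x, a, b, c)‖ ≤ C * h * (h ^ 2 + ‖a + b + c‖) := by
  set κ := Real.exp 2
  set B := 4 * (κ ^ 2 * (2 * κ + 3) + 3 * κ)
  have hκ : 1 ≤ κ := Real.one_le_exp (by norm_num)
  refine ⟨2 * (‖(1 : 𝔸)‖ + 2 * κ) * (2 * κ) * (B + 1), by positivity, ?_⟩
  intro h hh0 hh1 x a b c hx ha hb hc
  have hexp_sub_one : ∀ y : 𝔸, ‖y‖ ≤ 2 * h → ‖exp y - 1‖ ≤ 2 * h * κ := fun y hy =>
    (norm_exp_sub_one_le y).trans <|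
      mul_le_mul hy (Real.exp_le_exp.mpr (by linarith)) (by positivity) (by positivity)
  have hexp_neg : ‖exp (-x)‖ ≤ ‖(1 : 𝔸)‖ + 2 * κ := by
    rw [← sub_add_cancel (exp (-x)) 1, add_comm]
    exact norm_add_le_of_le le_rfl
      ((hexp_sub_one (-x) (by rwa [norm_neg])).trans (by nlinarith))
  have hface : ‖exp (-a) * exp (-b) * exp (-c) - 1‖ ≤ (B + 1) * (h ^ 2 + ‖a + b + c‖) := by
    refine (norm_exp_neg_mul_exp_neg_mul_exp_neg_sub_one_le ha hb hc
      (by linarith : 2 * h ≤ 2)).trans ?_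
    have : 0 ≤ B * ‖a + b + c‖ := by positivity
    nlinarith
  calc ‖holonomyDefect (x, a, b, c)‖
      ≤ 2 * ‖exp (-x)‖ * ‖exp x - 1‖ * ‖exp (-a) * exp (-b) * exp (-c) - 1‖ :=
        norm_mul_mul_sub_le_of_mul_eq_one (exp_neg_mul_exp x) _
    _ ≤ 2 * (‖(1 : 𝔸)‖ + 2 * κ) * (2 * h * κ) * ((B + 1) * (h ^ 2 + ‖a + b + c‖)) := by
        gcongr
        exact hexp_sub_one x hx
    _ = _ := by ring

theorem norm_fderiv_holonomyDefect_le : ∃ C > 0, ∀ h ∈ Set.Ioc (0 : ℝ) 1, ∀ x a b c : 𝔸,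
    ‖x‖ ≤ h → ‖a‖ ≤ h → ‖b‖ ≤ h → ‖c‖ ≤ h → ‖a + b + c‖ ≤ h ^ 2 → ∀ x' a' b' c' : 𝔸,
      ‖fderiv ℂ holonomyDefect (x, a, b, c) (x', a', b', c')‖ ≤
        C * (h * ‖a' + b' + c'‖ + h ^ 2 * (‖x'‖ + ‖a'‖ + ‖b'‖ + ‖c'‖)) := by
  obtain ⟨C, hC, hdefect⟩ := exists_norm_holonomyDefect_le (𝔸 := 𝔸)
  refine ⟨2 * C, by positivity, ?_⟩
  rintro h ⟨hh0, hh1⟩ x a b c hx ha hb hc hs x' a' b' c'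
  set N := ‖x'‖ + ‖a'‖ + ‖b'‖ + ‖c'‖
  set S := ‖a' + b' + c'‖
  obtain ⟨hx'N, ha'N, hb'N, hc'N⟩ : ‖x'‖ ≤ N ∧ ‖a'‖ ≤ N ∧ ‖b'‖ ≤ N ∧ ‖c'‖ ≤ N := by
    refine ⟨?_, ?_, ?_, ?_⟩ <;>
      linarith [norm_nonneg x', norm_nonneg a', norm_nonneg b', norm_nonneg c']
  rcases (by positivity : 0 ≤ N).eq_or_lt with hN | hN
  · obtain ⟨rfl, rfl, rfl, rfl⟩ : x' = 0 ∧ a' = 0 ∧ b' = 0 ∧ c' = 0 :=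
      ⟨norm_le_zero_iff.mp (hx'N.trans hN.ge), norm_le_zero_iff.mp (ha'N.trans hN.ge),
        norm_le_zero_iff.mp (hb'N.trans hN.ge), norm_le_zero_iff.mp (hc'N.trans hN.ge)⟩
    simp only [Prod.mk_zero_zero, map_zero, norm_zero]
    positivity
  have hsphere : ∀ z : ℂ, ‖z‖ = h / N →
      ‖holonomyDefect ((x, a, b, c) + z • (x', a', b', c'))‖ ≤
        C * h * (h ^ 2 + (h ^ 2 + h / N * S)) := fun z hz => by
    have hstep : ∀ y v : 𝔸, ‖y‖ ≤ h → ‖v‖ ≤ N → ‖y + z • v‖ ≤ 2 * h := fun y v hy hv => by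
      refine norm_add_le_of_le hy ((norm_smul z v).trans_le ?_) |>.trans_eq (two_mul h).symm
      rw [hz, div_mul_comm]
      exact mul_le_of_le_one_left hh0.le ((div_le_one hN).mpr hv)
    refine (hdefect h hh0.le hh1 _ _ _ _ (hstep x x' hx hx'N) (hstep a a' ha ha'N)
      (hstep b b' hb hb'N) (hstep c c' hc hc'N)).trans ?_
    gcongr
    calc _ = ‖(a + b + c) + z • (a' + b' + c')‖ := by congr 1; simp only [smul_add]; abel
      _ ≤ _ := norm_add_le_of_le hs ((norm_smul z _).trans_le (by rw [hz]))
  calc _ ≤ C * h * (h ^ 2 + (h ^ 2 + h / N * S)) / (h / N) :=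
        norm_fderiv_apply_le_of_forall_norm_le differentiable_holonomyDefect _ _
          (by positivity) hsphere
    _ = C * (2 * h ^ 2 * N + h * S) := by field_simp; ring
    _ ≤ _ := by
        have : 0 ≤ C * (h * S) := by positivity
        linarith

end Holonomy

/-- The derivative of the transported holonomy `Θ(x,a,b,c) = e^{−x} Ψ(a,b,c) e^{x}` differs
from the derivative of the holonomy `Ψ(a,b,c) = e^{−a} e^{−b} e^{−c}` by
`O(h‖a'+b'+c'‖ + h²(‖x'‖+‖a'‖+‖b'‖+‖c'‖))`: `Θ` is Fréchet differentiable and, with `‖·‖`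
the (submultiplicative) Frobenius norm, there is `C > 0` depending only on `n` (and the
norm) such that for all `h ∈ (0,1]`, all `x, a, b, c` of norm at most `h` with
`‖a + b + c‖ ≤ h²`, and all directions `x', a', b', c'`,
`‖DΘ(x,a,b,c)(x',a',b',c') − DΨ(a,b,c)(a',b',c')‖ ≤ C (h ‖a'+b'+c'‖ + h² (‖x'‖+‖a'‖+‖b'‖+‖c'‖))`. -/
theorem transported_holonomy_derivative (n : ℕ) :
    Differentiable ℂ (transportedPsi n) ∧
    ∃ C : ℝ, 0 < C ∧ ∀ h : ℝ, h ∈ Set.Ioc (0 : ℝ) 1 →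
      ∀ x a b c : Matrix (Fin n) (Fin n) ℂ,
        ‖x‖ ≤ h → ‖a‖ ≤ h → ‖b‖ ≤ h → ‖c‖ ≤ h → ‖a + b + c‖ ≤ h ^ 2 →
        ∀ x' a' b' c' : Matrix (Fin n) (Fin n) ℂ,
          ‖fderiv ℂ (transportedPsi n) (x, a, b, c) (x', a', b', c') -
              fderiv ℂ (holonomyPsi n) (a, b, c) (a', b', c')‖ ≤
            C * (h * ‖a' + b' + c'‖ + h ^ 2 * (‖x'‖ + ‖a'‖ + ‖b'‖ + ‖c'‖)) := by
  have hΨ : Differentiable ℂ (holonomyPsi n) := by unfold holonomyPsi; fun_prop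
  have hΘ : Differentiable ℂ (transportedPsi n) := by unfold transportedPsi; fun_prop
  refine ⟨hΘ, ?_⟩
  obtain ⟨C, hC, hbound⟩ := norm_fderiv_holonomyDefect_le (𝔸 := Matrix (Fin n) (Fin n) ℂ)
  refine ⟨C, hC, fun h hh x a b c hx ha hb hc hs x' a' b' c' => ?_⟩
  have hderiv : HasFDerivAt holonomyDefect (fderiv ℂ (transportedPsi n) (x, a, b, c) -
      (fderiv ℂ (holonomyPsi n) (a, b, c)).comp (ContinuousLinearMap.snd ℂ _ _)) (x, a, b, c) := by
    have hsnd : HasFDerivAt (holonomyPsi n ∘ Prod.snd)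
        ((fderiv ℂ (holonomyPsi n) (a, b, c)).comp (ContinuousLinearMap.snd ℂ _ _)) (x, a, b, c) :=
      (hΨ (a, b, c)).hasFDerivAt.comp (x, a, b, c) hasFDerivAt_snd
    exact (hΘ _).hasFDerivAt.sub hsnd
  calc _ = ‖fderiv ℂ holonomyDefect (x, a, b, c) (x', a', b', c')‖ := by
        rw [hderiv.fderiv]; rfl
    _ ≤ _ := hbound h hh x a b c hx ha hb hc hs x' a' b' c'
end
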